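/- arXiv:2011.04320 — 4 statements merged into one kernel-verified Lean document; each statement's English description precedes it below -/
import Mathlib

section
/- For any entire function F of the form F(z) = P(z)·exp(S z² + D z), where P is a nonzero polynomial of degree n and S, D are complex constants, the derivative F′ has the same form Q(z)·exp(S z² + D z) where Q is a polynomial whose degree is n+1 if S ≠ 0; n if S = 0 and D ≠ 0; and n−1 if S = D = 0 and n ≥ 1. -/
/-!
Writing the exponent as a polynomial `R = S X² + D X`, the product rule gives
`(P e^R)' = (P' + R' P) e^R`. Since `deg P' < deg P`, the degree of `P' + R' P` is
`deg R' + deg P` as soon as `R' ≠ 0`, i.e. `n + 1` or `n` according as `S ≠ 0` or `S = 0 ≠ D`;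
when `R' = 0` it is just `P'`, of degree `n - 1`.
-/

open Polynomial

theorem Polynomial.hasDerivAt_eval_mul_cexp_eval (P R : ℂ[X]) (z : ℂ) :
    HasDerivAt (fun w => P.eval w * Complex.exp (R.eval w))
      ((derivative P + derivative R * P).eval z * Complex.exp (R.eval z)) z := by
  refine ((P.hasDerivAt z).mul (R.hasDerivAt z).cexp).congr_deriv ?_
  simp only [eval_add, eval_mul]
  ring

theorem Polynomial.natDegree_derivative_add_mul {K : Type*} [CommSemiring K] [NoZeroDivisors K]
    {P L : K[X]} (hP : P ≠ 0) (hL : L ≠ 0) :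
    (derivative P + L * P).natDegree = L.natDegree + P.natDegree := by
  have hLP : P.degree ≤ (L * P).degree := mul_comm P L ▸ degree_le_mul_left P hL
  rw [natDegree_add_eq_right_of_degree_lt ((degree_derivative_lt hP).trans_le hLP),
    natDegree_mul hL hP]

/-- For `F(z) = P(z)·exp(S z² + D z)` with `P` a nonzero polynomial of degree `n`, the
derivative `F'` has the form `Q(z)·exp(S z² + D z)` with `Q` a polynomial of degree `n+1`
if `S ≠ 0`, degree `n` if `S = 0` and `D ≠ 0`, and degree `n−1` if `S = D = 0` and `n ≥ 1`. -/
theorem stmt_4 (P : Polynomial ℂ) (hP : P ≠ 0) (S D : ℂ) (n : ℕ) (hn : P.natDegree = n) :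
    ∃ Q : Polynomial ℂ,
      (∀ z : ℂ, deriv (fun w : ℂ => P.eval w * Complex.exp (S * w ^ 2 + D * w)) z
          = Q.eval z * Complex.exp (S * z ^ 2 + D * z)) ∧
      (S ≠ 0 → Q.natDegree = n + 1) ∧
      (S = 0 → D ≠ 0 → Q.natDegree = n) ∧
      (S = 0 → D = 0 → 1 ≤ n → Q.natDegree = n - 1) := by
  set R : ℂ[X] := C S * X ^ 2 + C D * X
  have hR : derivative R = C (2 * S) * X + C D := by
    simp only [R, derivative_add, derivative_C_mul_X_pow, derivative_C_mul_X, C_mul]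
    norm_num [mul_comm]
  refine ⟨derivative P + derivative R * P, fun z => ?_, fun hS => ?_, fun hS hD => ?_,
    fun hS hD _ => ?_⟩
  · simpa [R] using (P.hasDerivAt_eval_mul_cexp_eval R z).deriv
  · have hR1 : (derivative R).natDegree = 1 := hR ▸ natDegree_linear (mul_ne_zero two_ne_zero hS)
    rw [natDegree_derivative_add_mul hP (ne_zero_of_natDegree_gt (hR1 ▸ zero_lt_one)), hR1, hn,
      add_comm]
  · have hR0 : derivative R = C D := by simp [hR, hS]
    rw [natDegree_derivative_add_mul hP (by simpa [hR0] using hD), hR0, natDegree_C, hn, zero_add]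
  · simp [hR, hS, hD, hn]
end

section
/- For all m ∈ ℕ and complex constants a ≠ 0 and b, the m-th derivative of z ↦ exp(−(1/2)a z² + b z) evaluated at z = 0 equals a^{m/2} He_m(b/√a), where He_m is the m-th probabilists' Hermite polynomial and √a is any fixed square root of a. -/
/-!
Write `a = s²` and `b = s w`. The exponent then has derivative `s (w - s z)`, so differentiating
`P(w - s z) · exp(…)` multiplies by `s` and replaces `P` by `X P - P'`, which is the recurrence of
the Hermite polynomials `Polynomial.hermite`. Hence the `n`-th derivative is
`sⁿ Heₙ(w - s z) · exp(…)`, equal to `sⁿ Heₙ(w)` at `0`. The explicit sum defining `hermiteHe` is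
`Polynomial.hermite` written through its coefficients `(-1)^p (2p-1)‼ C(m, 2p)` at `x^(m-2p)`,
the other coefficients vanishing by parity.
-/

/-- The `m`-th probabilists' Hermite polynomial, as an explicit sum:
`He_m(x) = Σ_{p=0}^{⌊m/2⌋} (m!(−1)^p/(2^p p! (m−2p)!)) x^{m−2p}`. -/
noncomputable def hermiteHe (m : ℕ) (x : ℂ) : ℂ :=
  ∑ p ∈ Finset.range (m / 2 + 1),
    ((Nat.factorial m : ℂ) * (-1) ^ p /
        ((2 : ℂ) ^ p * (Nat.factorial p : ℂ) * (Nat.factorial (m - 2 * p) : ℂ))) *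
      x ^ (m - 2 * p)

open Polynomial Finset
open scoped Nat

theorem Nat.factorial_two_mul_eq_doubleFactorial_mul (p : ℕ) :
    (2 * p)! = (2 * p - 1)‼ * (2 ^ p * p !) := by
  cases p with
  | zero => rfl
  | succ q =>
    rw [show 2 * (q + 1) = 2 * q + 1 + 1 by ring, Nat.factorial_eq_mul_doubleFactorial,
      show 2 * q + 1 + 1 = 2 * (q + 1) by ring, Nat.doubleFactorial_two_mul, mul_comm,
      show 2 * (q + 1) - 1 = 2 * q + 1 by omega]

namespace Polynomial

theorem coeff_hermite_sub_two_mul {m p : ℕ} (h : 2 * p ≤ m) :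
    (hermite m).coeff (m - 2 * p) = (-1) ^ p * (2 * p - 1)‼ * m.choose (2 * p) := by
  have := coeff_hermite_explicit p (m - 2 * p)
  rwa [Nat.add_sub_cancel' h, Nat.choose_symm h] at this

theorem coeff_hermite_sub_two_mul_eq_div {K : Type*} [Field K] [CharZero K] {m p : ℕ}
    (h : 2 * p ≤ m) :
    ((hermite m).coeff (m - 2 * p) : K) =
      m ! * (-1) ^ p / (2 ^ p * p ! * (m - 2 * p)!) := by
  have hfac : (2 * p - 1)‼ * m.choose (2 * p) * (2 ^ p * p ! * (m - 2 * p)!) = m ! := by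
    rw [← Nat.choose_mul_factorial_mul_factorial h, Nat.factorial_two_mul_eq_doubleFactorial_mul]
    ring
  rw [coeff_hermite_sub_two_mul h, eq_div_iff (by simp [Nat.factorial_ne_zero])]
  push_cast
  rw [← hfac]
  push_cast
  ring

theorem aeval_hermite_eq_sum {R : Type*} [CommRing R] (m : ℕ) (x : R) :
    aeval x (hermite m) =
      ∑ p ∈ range (m / 2 + 1), (hermite m).coeff (m - 2 * p) • x ^ (m - 2 * p) := by
  have hinj : Set.InjOn (fun p => m - 2 * p) (range (m / 2 + 1)) := by
    intro p hp q hq h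
    simp only [coe_range, Set.mem_Iio] at hp hq h
    omega
  have hsub : (range (m / 2 + 1)).image (fun p => m - 2 * p) ⊆ range (m + 1) := by
    intro k hk
    simp only [mem_image, mem_range] at hk ⊢
    omega
  rw [aeval_eq_sum_range, natDegree_hermite, ← sum_subset hsub, sum_image hinj]
  intro k hk hk'
  simp only [mem_image, mem_range, not_exists, not_and] at hk hk'
  rcases Nat.even_or_odd (m + k) with ⟨t, ht⟩ | hodd
  · exact absurd (by omega) (hk' (t - k) (by omega))
  · rw [coeff_hermite_of_odd_add hodd, zero_smul]

end Polynomial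

theorem hermiteHe_eq_aeval_hermite (m : ℕ) (x : ℂ) : hermiteHe m x = aeval x (hermite m) := by
  rw [aeval_hermite_eq_sum]
  refine sum_congr rfl fun p hp => ?_
  rw [zsmul_eq_mul, coeff_hermite_sub_two_mul_eq_div (by simp at hp; omega)]

section Gaussian

open Complex

variable (s w : ℂ)

theorem hasDerivAt_cexp_gaussian (z : ℂ) :
    HasDerivAt (fun z => cexp (-(1 / 2) * s ^ 2 * z ^ 2 + s * w * z))
      (s * (w - s * z) * cexp (-(1 / 2) * s ^ 2 * z ^ 2 + s * w * z)) z := by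
  have hexponent : HasDerivAt (fun z : ℂ => -(1 / 2) * s ^ 2 * z ^ 2 + s * w * z)
      (s * (w - s * z)) z := by
    refine (((hasDerivAt_pow 2 z).const_mul (-(1 / 2) * s ^ 2)).add
      ((hasDerivAt_id' z).const_mul (s * w))).congr_deriv ?_
    push_cast
    ring
  simpa only [mul_comm] using hexponent.cexp

theorem hasDerivAt_aeval_mul_cexp_gaussian (P : ℤ[X]) (z : ℂ) :
    HasDerivAt (fun z => aeval (w - s * z) P * cexp (-(1 / 2) * s ^ 2 * z ^ 2 + s * w * z))
      (s * aeval (w - s * z) (X * P - derivative P) *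
        cexp (-(1 / 2) * s ^ 2 * z ^ 2 + s * w * z)) z := by
  have hP : HasDerivAt (fun z => aeval (w - s * z) P) (aeval (w - s * z) (derivative P) * -s) z :=
    (P.hasDerivAt_aeval _).comp z (by simpa using ((hasDerivAt_id z).const_mul s).const_sub w)
  refine (hP.mul (hasDerivAt_cexp_gaussian s w z)).congr_deriv ?_
  simp only [map_sub, map_mul, aeval_X]
  ring

theorem iteratedDeriv_cexp_gaussian (n : ℕ) :
    iteratedDeriv n (fun z => cexp (-(1 / 2) * s ^ 2 * z ^ 2 + s * w * z)) =
      fun z => s ^ n * (aeval (w - s * z) (hermite n) *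
        cexp (-(1 / 2) * s ^ 2 * z ^ 2 + s * w * z)) := by
  induction n with
  | zero => simp
  | succ n ih =>
    ext z
    rw [iteratedDeriv_succ, ih,
      ((hasDerivAt_aeval_mul_cexp_gaussian s w (hermite n) z).const_mul (s ^ n)).deriv,
      hermite_succ]
    ring

end Gaussian

/-- For all `m ∈ ℕ` and complex constants `a ≠ 0` and `b`, the `m`-th derivative of
`z ↦ exp(−(1/2) a z² + b z)` at `z = 0` equals `a^{m/2} He_m(b/√a) = (√a)^m He_m(b/√a)`,
where `√a` is any fixed square root `s` of `a`. -/
theorem stmt_7 (m : ℕ) (a b : ℂ) (ha : a ≠ 0) (s : ℂ) (hs : s ^ 2 = a) :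
    iteratedDeriv m (fun z : ℂ => Complex.exp (-(1 / 2) * a * z ^ 2 + b * z)) 0 =
      s ^ m * hermiteHe m (b / s) := by
  subst hs
  have hs : s ≠ 0 := by simpa using ha
  obtain ⟨w, rfl⟩ : ∃ w, b = s * w := ⟨b / s, (mul_div_cancel₀ b hs).symm⟩
  rw [iteratedDeriv_cexp_gaussian, mul_div_cancel_left₀ w hs, hermiteHe_eq_aeval_hermite]
  simp
end

section
/- Let ρ be a single-mode quantum state with Fock-basis matrix elements ρ_{kk} = ⟨k|ρ|k⟩, and let α ∈ ℂ. For n ∈ ℕ*, define ω_ρ(α,n) = Σ_{k=0}^{n−1} ⟨2k+1| D†(α) ρ D(α) |2k+1⟩, where D(α) is the displacement operator. Then the Wigner function W_ρ(α) = (2/π) Tr[D(α) Π_P D†(α) ρ], with Π_P = Σ_{k≥0} (−1)^k |k⟩⟨k| the parity operator, satisfies W_ρ(α) ≤ (2/π)(1 − 2 ω_ρ(α,n)). In particular, if ω_ρ(α,n) > 1/2 for some n, then W_ρ(α) < 0. -/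
/-!
Write `σ` for the diagonal of the displaced state. Splitting the alternating sum into even and odd
indices gives `∑ (-1)^k σ k = ∑ σ k - 2 ∑ σ (2k+1)`, and since `σ ≥ 0` the full odd sum dominates
each of its partial sums `ω(α, n)`.
-/

section Alternating

variable {α : Type*} [Ring α] [UniformSpace α] [IsUniformAddGroup α] [CompleteSpace α]
  [T2Space α]

theorem HasSum.alternating {f : ℕ → α} {s : α} (hf : HasSum f s) :
    HasSum (fun k => (-1) ^ k * f k) (s - 2 * ∑' k, f (2 * k + 1)) := by
  have hodd : Summable fun k => f (2 * k + 1) :=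
    hf.summable.comp_injective fun a b h => by simpa using h
  have heven : Summable fun k => f (2 * k) :=
    hf.summable.comp_injective (mul_right_injective₀ two_ne_zero)
  have hsplit : ∑' k, f (2 * k) + ∑' k, f (2 * k + 1) = s :=
    (tsum_even_add_odd heven hodd).trans hf.tsum_eq
  have h : HasSum (fun k => (-1) ^ k * f k) (∑' k, f (2 * k) + -∑' k, f (2 * k + 1)) :=
    HasSum.even_add_odd (by simpa [pow_mul] using heven.hasSum)
      (by simpa [pow_succ, pow_mul] using hodd.hasSum.neg)
  rw [← hsplit, two_mul]
  convert h using 1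
  abel

end Alternating

theorem tsum_neg_one_pow_mul_le_sub_two_mul_sum_odd {σ : ℕ → ℝ} {s : ℝ} (hpos : ∀ k, 0 ≤ σ k)
    (hσ : HasSum σ s) (n : ℕ) :
    ∑' k, (-1 : ℝ) ^ k * σ k ≤ s - 2 * ∑ k ∈ Finset.range n, σ (2 * k + 1) := by
  have hodd : Summable fun k => σ (2 * k + 1) :=
    hσ.summable.comp_injective fun a b h => by simpa using h
  have hpartial : ∑ k ∈ Finset.range n, σ (2 * k + 1) ≤ ∑' k, σ (2 * k + 1) :=
    hodd.sum_le_tsum _ fun k _ => hpos _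
  rw [hσ.alternating.tsum_eq]
  linarith

theorem stmt_8_general (σ : ℕ → ℝ) (hpos : ∀ k, 0 ≤ σ k) (hsum : HasSum σ 1)
    (n : ℕ) :
    (2 / Real.pi) * (∑' k : ℕ, (-1 : ℝ) ^ k * σ k) ≤
        (2 / Real.pi) * (1 - 2 * ∑ k ∈ Finset.range n, σ (2 * k + 1)) ∧
      ((1 / 2 : ℝ) < ∑ k ∈ Finset.range n, σ (2 * k + 1) →
        (2 / Real.pi) * (∑' k : ℕ, (-1 : ℝ) ^ k * σ k) < 0) := by
  have hle := tsum_neg_one_pow_mul_le_sub_two_mul_sum_odd hpos hsum n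
  have hπ : 0 < 2 / Real.pi := by positivity
  refine ⟨mul_le_mul_of_nonneg_left hle hπ.le, fun hω => mul_neg_of_pos_of_neg hπ ?_⟩
  linarith

/-- Wigner-negativity witness. Let `σ k = ⟨k|D†(α) ρ D(α)|k⟩` be the Fock-basis diagonal
entries of the displaced state (so `σ k ≥ 0` and `Σ σ k = 1`). The Wigner function at `α`
is `W_ρ(α) = (2/π) Tr[D(α) Π_P D†(α) ρ] = (2/π) Σ_k (−1)^k σ k`, and with
`ω_ρ(α,n) = Σ_{k=0}^{n−1} σ (2k+1)` one has `W_ρ(α) ≤ (2/π)(1 − 2 ω_ρ(α,n))`.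
In particular, if `ω_ρ(α,n) > 1/2` for some `n ≥ 1`, then `W_ρ(α) < 0`. -/
theorem stmt_8 (σ : ℕ → ℝ) (hpos : ∀ k, 0 ≤ σ k) (hsum : HasSum σ 1)
    (n : ℕ) (hn : 1 ≤ n) :
    (2 / Real.pi) * (∑' k : ℕ, (-1 : ℝ) ^ k * σ k) ≤
        (2 / Real.pi) * (1 - 2 * ∑ k ∈ Finset.range n, σ (2 * k + 1)) ∧
      ((1 / 2 : ℝ) < ∑ k ∈ Finset.range n, σ (2 * k + 1) →
        (2 / Real.pi) * (∑' k : ℕ, (-1 : ℝ) ^ k * σ k) < 0) :=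
  stmt_8_general σ hpos hsum n
end

section
/- A pure state |ψ⟩ has finite stellar rank n if and only if its stellar function F*_ψ(z) = e^{|z|²/2}⟨ψ*|z⟩ = Σ_{k≥0} (ψ_k/√(k!)) z^k has exactly n zeros counted with multiplicity; for a core state |C⟩ = Σ_{m=0}^{n} c_m |m⟩ with c_n ≠ 0, the stellar function is the polynomial Σ_{m=0}^{n} (c_m/√(m!)) z^m of degree n, hence the stellar rank of a core state equals its maximal Fock-support index n. -/
/-- The stellar function of a state with Fock coefficients `ψ : ℕ → ℂ`:
`F*_ψ(z) = Σ_k (ψ_k/√(k!)) z^k`. -/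
noncomputable def stellarFunction (ψ : ℕ → ℂ) (z : ℂ) : ℂ :=
  ∑' k : ℕ, (ψ k / (Real.sqrt (Nat.factorial k) : ℂ)) * z ^ k

open Polynomial

theorem Polynomial.exists_coeff_eq_and_natDegree_eq {R : Type*} [Semiring R] {f : ℕ → R} {n : ℕ}
    (hf : ∀ m, n < m → f m = 0) (hn : f n ≠ 0) :
    ∃ P : R[X], (∀ m, P.coeff m = f m) ∧ P.natDegree = n := by
  classical
  set P : R[X] := ofFn (n + 1) fun i => f i
  have hP : ∀ m, P.coeff m = f m := fun m => by
    rcases lt_or_ge m (n + 1) with hm | hm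
    · exact ofFn_coeff_eq_val_of_lt _ hm
    · rw [ofFn_coeff_eq_zero_of_ge _ hm, hf m hm]
  refine ⟨P, hP, natDegree_eq_of_le_of_coeff_ne_zero ?_ (by rwa [hP])⟩
  exact natDegree_le_iff_coeff_eq_zero.2 fun m hm => by rw [hP, hf m hm]

theorem sqrt_factorial_ne_zero (m : ℕ) : (Real.sqrt (Nat.factorial m) : ℂ) ≠ 0 := by
  exact_mod_cast (Real.sqrt_pos.2 (by positivity : (0 : ℝ) < Nat.factorial m)).ne'

theorem stellarFunction_eq_eval {c : ℕ → ℂ} {P : ℂ[X]}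
    (hP : ∀ m, P.coeff m = c m / (Real.sqrt (Nat.factorial m) : ℂ)) (z : ℂ) :
    stellarFunction c z = P.eval z := by
  rw [stellarFunction, eval_eq_sum_range]
  simp only [hP]
  refine tsum_eq_sum fun k hk => ?_
  rw [← hP, coeff_eq_zero_of_natDegree_lt (by simpa using hk), zero_mul]

/-- For a core state `|C⟩ = Σ_{m=0}^n c_m |m⟩` with `c_n ≠ 0`, the stellar function is the
polynomial `Σ_{m=0}^n (c_m/√(m!)) z^m` of degree `n`; hence it has exactly `n` zeros counted
with multiplicity, i.e. the stellar rank of a core state equals its maximal Fock-support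
index `n`. -/
theorem stmt_12 (n : ℕ) (c : ℕ → ℂ) (hsupp : ∀ m, n < m → c m = 0) (hc : c n ≠ 0) :
    ∃ P : Polynomial ℂ,
      (∀ m : ℕ, P.coeff m = c m / (Real.sqrt (Nat.factorial m) : ℂ)) ∧
      P.natDegree = n ∧
      (∀ z : ℂ, stellarFunction c z = P.eval z) ∧
      P.roots.card = n := by
  obtain ⟨P, hP, hdeg⟩ := exists_coeff_eq_and_natDegree_eq
    (f := fun m => c m / (Real.sqrt (Nat.factorial m) : ℂ))
    (fun m hm => by rw [hsupp m hm, zero_div]) (div_ne_zero hc (sqrt_factorial_ne_zero n))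
  exact ⟨P, hP, hdeg, stellarFunction_eq_eval hP, IsAlgClosed.card_roots_eq_natDegree.trans hdeg⟩
end
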